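/- (Coercivity of the face dissipation, Sedan scheme.) Fix δ ∈ (0,1) and M > 0. For c_K, c_L ∈ (0,1) and Φ_K, Φ_L ∈ ℝ, define the Sedan flux F(c_K, c_L, Φ_K, Φ_L) = B((Φ_L + ν(c_L)) - (Φ_K + ν(c_K)))·c_K - B((Φ_K + ν(c_K)) - (Φ_L + ν(c_L)))·c_L and the dissipation D(c_K, c_L, Φ_K, Φ_L) = F(c_K, c_L, Φ_K, Φ_L)·(h(c_K) + Φ_K - h(c_L) - Φ_L). Then Ψ_{δ,M}(c_L) = inf{ D(c_K, c_L, Φ_K, Φ_L) : c_K ∈ [δ, 1), Φ_K, Φ_L ∈ [-M, M] } tends to +∞ as c_L → 0⁺, and Υ_{δ,M}(c_L) = inf{ D(c_K, c_L, Φ_K, Φ_L) : c_K ∈ (0, 1-δ], Φ_K, Φ_L ∈ [-M, M] } tends to +∞ as c_L → 1⁻. -/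

import Mathlib

open Filter

/-- The Bernoulli function `B(u) = u / (exp u - 1)` for `u ≠ 0`, extended by `B 0 = 1`. -/
noncomputable def bernoulliB (u : ℝ) : ℝ := if u = 0 then 1 else u / (Real.exp u - 1)

/-- The chemical potential `h(c) = log (c / (1-c))`. -/
noncomputable def hF (c : ℝ) : ℝ := Real.log (c / (1 - c))

/-- The excess chemical potential `ν(c) = -log(1-c)`. -/
noncomputable def nuF (c : ℝ) : ℝ := - Real.log (1 - c)

/-- The Sedan numerical flux. -/
noncomputable def Fsedan (cK cL ΦK ΦL : ℝ) : ℝ :=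
  bernoulliB ((ΦL + nuF cL) - (ΦK + nuF cK)) * cK
    - bernoulliB ((ΦK + nuF cK) - (ΦL + nuF cL)) * cL

/-- The face dissipation of the Sedan scheme. -/
noncomputable def Dsedan (cK cL ΦK ΦL : ℝ) : ℝ :=
  Fsedan cK cL ΦK ΦL * (hF cK + ΦK - hF cL - ΦL)

lemma bernoulliB_ge (u c : ℝ) (huc : u ≤ c) (hc : 0 ≤ c) : Real.exp (-c) ≤ bernoulliB u := by
  unfold bernoulliB
  rcases lt_trichotomy u 0 with hu | hu | hu
  · rw [if_neg hu.ne]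
    have h1 : Real.exp u - 1 < 0 := by
      have := Real.exp_lt_one_iff.2 hu
      linarith
    have h2 : u + 1 ≤ Real.exp u := Real.add_one_le_exp u
    calc Real.exp (-c) ≤ 1 := Real.exp_le_one_iff.2 (by linarith)
    _ ≤ u / (Real.exp u - 1) := by
        rw [le_div_iff_of_neg h1]; linarith
  · rw [if_pos hu]; exact Real.exp_le_one_iff.2 (neg_nonpos.2 hc)
  · rw [if_neg hu.ne']
    have h2 : u + 1 ≤ Real.exp u := Real.add_one_le_exp u
    have h1 : 0 < Real.exp u - 1 := by linarith
    have h3 : 1 - u ≤ Real.exp (-u) := by linarith [Real.add_one_le_exp (-u)]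
    calc Real.exp (-c) ≤ Real.exp (-u) := Real.exp_le_exp.2 (by linarith)
    _ ≤ u / (Real.exp u - 1) := by
        rw [le_div_iff₀ h1]
        have he : (0:ℝ) < Real.exp u := Real.exp_pos u
        have h4 : Real.exp (-u) * Real.exp u = 1 := by rw [← Real.exp_add]; simp
        nlinarith [mul_le_mul_of_nonneg_right h3 he.le]

lemma bernoulliB_neg_eq (u : ℝ) : bernoulliB (-u) = Real.exp u * bernoulliB u := by
  unfold bernoulliB
  rcases eq_or_ne u 0 with h | h
  · simp [h]
  · rw [if_neg (neg_ne_zero.2 h), if_neg h]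
    have h1 : Real.exp u - 1 ≠ 0 := by
      rw [sub_ne_zero]; exact fun he => h ((Real.exp_eq_one_iff _).mp he)
    have h2 : Real.exp (-u) - 1 ≠ 0 := by
      rw [sub_ne_zero]; exact fun he => (neg_ne_zero.2 h) ((Real.exp_eq_one_iff _).mp he)
    have h3 : Real.exp (-u) * Real.exp u = 1 := by
      rw [← Real.exp_add]; simp
    field_simp
    linear_combination (-1) * h3

lemma bernoulliB_pos (u : ℝ) : 0 < bernoulliB u := by
  unfold bernoulliB
  rcases lt_trichotomy u 0 with hu | hu | hu
  · rw [if_neg hu.ne]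
    have h1 : Real.exp u - 1 < 0 := by linarith [Real.exp_lt_one_iff.2 hu]
    exact div_pos_of_neg_of_neg hu h1
  · rw [if_pos hu]; norm_num
  · rw [if_neg hu.ne']
    exact div_pos hu (by linarith [Real.add_one_le_exp u])

lemma hF_eq (c : ℝ) (hc : c ∈ Set.Ioo (0:ℝ) 1) : hF c = Real.log c + nuF c := by
  unfold hF nuF
  rw [Real.log_div hc.1.ne' (by linarith [hc.2] : (1:ℝ) - c ≠ 0)]
  ring

lemma hF_mono (a b : ℝ) (ha : 0 < a) (hb : b < 1) (hab : a ≤ b) : hF a ≤ hF b := by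
  have hb0 : 0 < b := lt_of_lt_of_le ha hab
  have ha1 : a < 1 := lt_of_le_of_lt hab hb
  apply Real.log_le_log (div_pos ha (by linarith))
  rw [div_le_div_iff₀ (by linarith) (by linarith)]
  nlinarith

lemma nuF_nonneg (c : ℝ) (h0 : 0 ≤ c) (h1 : c < 1) : 0 ≤ nuF c := by
  unfold nuF
  simpa using Real.log_nonpos (by linarith) (by linarith)

lemma nuF_mono (a b : ℝ) (hb : b < 1) (hab : a ≤ b) : nuF a ≤ nuF b := by
  unfold nuF
  simpa using Real.log_le_log (by linarith) (by linarith)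

lemma Dsedan_eq1 (cK cL ΦK ΦL : ℝ) (hK : cK ∈ Set.Ioo (0:ℝ) 1) (hL : cL ∈ Set.Ioo (0:ℝ) 1) :
    Dsedan cK cL ΦK ΦL = bernoulliB ((ΦL + nuF cL) - (ΦK + nuF cK)) * cK *
      ((1 - Real.exp (-(hF cK + ΦK - hF cL - ΦL))) * (hF cK + ΦK - hF cL - ΦL)) := by
  have hexp : Real.exp (-(hF cK + ΦK - hF cL - ΦL)) =
      cL / cK * Real.exp ((ΦL + nuF cL) - (ΦK + nuF cK)) := by
    rw [hF_eq cK hK, hF_eq cL hL]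
    rw [show -(Real.log cK + nuF cK + ΦK - (Real.log cL + nuF cL) - ΦL)
        = Real.log cL - Real.log cK + ((ΦL + nuF cL) - (ΦK + nuF cK)) by ring]
    rw [Real.exp_add, Real.exp_sub, Real.exp_log hK.1, Real.exp_log hL.1]
  rw [Dsedan, Fsedan, show (ΦK + nuF cK) - (ΦL + nuF cL)
      = -((ΦL + nuF cL) - (ΦK + nuF cK)) by ring, bernoulliB_neg_eq, hexp]
  field_simp [hK.1.ne']

lemma Dsedan_eq2 (cK cL ΦK ΦL : ℝ) (hK : cK ∈ Set.Ioo (0:ℝ) 1) (hL : cL ∈ Set.Ioo (0:ℝ) 1) :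
    Dsedan cK cL ΦK ΦL = bernoulliB ((ΦK + nuF cK) - (ΦL + nuF cL)) * cL *
      ((Real.exp (hF cK + ΦK - hF cL - ΦL) - 1) * (hF cK + ΦK - hF cL - ΦL)) := by
  have hexp : Real.exp (hF cK + ΦK - hF cL - ΦL) =
      cK / cL * Real.exp ((ΦK + nuF cK) - (ΦL + nuF cL)) := by
    rw [hF_eq cK hK, hF_eq cL hL]
    rw [show Real.log cK + nuF cK + ΦK - (Real.log cL + nuF cL) - ΦL
        = Real.log cK - Real.log cL + ((ΦK + nuF cK) - (ΦL + nuF cL)) by ring]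
    rw [Real.exp_add, Real.exp_sub, Real.exp_log hK.1, Real.exp_log hL.1]
  rw [Dsedan, Fsedan, show (ΦL + nuF cL) - (ΦK + nuF cK)
      = -((ΦK + nuF cK) - (ΦL + nuF cL)) by ring, bernoulliB_neg_eq, hexp]
  field_simp [hL.1.ne']

theorem sedan_dissipation_coercive (δ M : ℝ)
    (hδ : δ ∈ Set.Ioo (0 : ℝ) 1) (hM : 0 < M) :
    Tendsto (fun cL : ℝ =>
        sInf { d : ℝ | ∃ cK ∈ Set.Ico δ (1 : ℝ), ∃ ΦK ∈ Set.Icc (-M) M,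
          ∃ ΦL ∈ Set.Icc (-M) M, d = Dsedan cK cL ΦK ΦL })
      (nhdsWithin 0 (Set.Ioo (0 : ℝ) 1)) atTop ∧
    Tendsto (fun cL : ℝ =>
        sInf { d : ℝ | ∃ cK ∈ Set.Ioc (0 : ℝ) (1 - δ), ∃ ΦK ∈ Set.Icc (-M) M,
          ∃ ΦL ∈ Set.Icc (-M) M, d = Dsedan cK cL ΦK ΦL })
      (nhdsWithin 1 (Set.Ioo (0 : ℝ) 1)) atTop := by
  obtain ⟨hδ0, hδ1⟩ := hδ
  have hlog2 : Real.log 2 ≤ 1 := by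
    have := Real.log_le_sub_one_of_pos (by norm_num : (0:ℝ) < 2); linarith
  have hexp1 : (2:ℝ) ≤ Real.exp 1 := by linarith [Real.add_one_le_exp 1]
  have hexpneg1 : Real.exp (-1) ≤ 1/2 := by
    have h1 : Real.exp (-1) * Real.exp 1 = 1 := by rw [← Real.exp_add]; simp
    nlinarith [Real.exp_pos (-1)]
  constructor
  · rw [tendsto_atTop]
    intro b
    have hE : (0:ℝ) < Real.exp (-(2*M+1)) := Real.exp_pos _
    set C : ℝ := Real.exp (-(2*M+1)) * δ * (1/2) with hCdef
    have hCpos : 0 < C := by positivity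
    set V : ℝ := max 1 (b / C) with hVdef
    have hV1 : 1 ≤ V := le_max_left _ _
    set T : ℝ := hF δ - 2*M - V with hTdef
    set ε : ℝ := min (1/2) (Real.exp (T-1)) with hεdef
    have hε : 0 < ε := lt_min (by norm_num) (Real.exp_pos _)
    have hev : ∀ᶠ cL in nhdsWithin (0:ℝ) (Set.Ioo (0:ℝ) 1), cL ∈ Set.Ioo (0:ℝ) 1 ∧ cL < ε := by
      filter_upwards [eventually_mem_nhdsWithin,
        (eventually_lt_nhds hε).filter_mono nhdsWithin_le_nhds] with x h1 h2
      exact ⟨h1, h2⟩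
    filter_upwards [hev] with cL hcLmem
    obtain ⟨hL, hlt⟩ := hcLmem
    have hcLhalf : cL < 1/2 := lt_of_lt_of_le hlt (min_le_left _ _)
    have hnuL : nuF cL ≤ 1 := by
      have h1 : Real.log (1/2) ≤ Real.log (1 - cL) :=
        Real.log_le_log (by norm_num) (by linarith)
      have h2 : Real.log (1/2) = -Real.log 2 := by
        rw [one_div, Real.log_inv]
      unfold nuF; linarith
    have hhFL : hF cL ≤ T := by
      have h1 : Real.log cL < T - 1 := by
        rw [Real.log_lt_iff_lt_exp hL.1]
        exact lt_of_lt_of_le hlt (min_le_right _ _)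
      rw [hF_eq cL hL]; linarith
    apply le_csInf
    · exact ⟨Dsedan δ cL 0 0, δ, ⟨le_refl δ, hδ1⟩, 0, ⟨by linarith, hM.le⟩,
        0, ⟨by linarith, hM.le⟩, rfl⟩
    rintro d ⟨cK, hcK, ΦK, hΦK, ΦL, hΦL, rfl⟩
    have hKIoo : cK ∈ Set.Ioo (0:ℝ) 1 := ⟨lt_of_lt_of_le hδ0 hcK.1, hcK.2⟩
    set u : ℝ := (ΦL + nuF cL) - (ΦK + nuF cK) with hudef
    set v : ℝ := hF cK + ΦK - hF cL - ΦL with hvdef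
    have hnuK : 0 ≤ nuF cK := nuF_nonneg cK hKIoo.1.le hKIoo.2
    have hu : u ≤ 2*M + 1 := by
      rw [hudef]; linarith [hΦK.1, hΦL.2]
    have hB : Real.exp (-(2*M+1)) ≤ bernoulliB u := bernoulliB_ge u _ hu (by linarith)
    have hv : V ≤ v := by
      have h1 : hF δ ≤ hF cK := hF_mono δ cK hδ0 hKIoo.2 hcK.1
      rw [hvdef]; rw [hTdef] at hhFL; linarith [hΦK.1, hΦL.2]
    have hv1 : 1 ≤ v := le_trans hV1 hv
    have hev2 : (1:ℝ)/2 ≤ 1 - Real.exp (-v) := by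
      have h1 : Real.exp (-v) ≤ Real.exp (-1) := Real.exp_le_exp.2 (by linarith)
      linarith
    rw [Dsedan_eq1 cK cL ΦK ΦL hKIoo hL, ← hudef, ← hvdef]
    have s1 : Real.exp (-(2*M+1)) * δ ≤ bernoulliB u * cK :=
      mul_le_mul hB hcK.1 hδ0.le (bernoulliB_pos u).le
    have s2 : (1/2) * v ≤ (1 - Real.exp (-v)) * v :=
      mul_le_mul_of_nonneg_right hev2 (by linarith)
    have s3 : Real.exp (-(2*M+1)) * δ * ((1/2) * v) ≤
        bernoulliB u * cK * ((1 - Real.exp (-v)) * v) :=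
      mul_le_mul s1 s2 (by linarith) (mul_nonneg (bernoulliB_pos u).le hKIoo.1.le)
    have hbC : b / C ≤ v := le_trans (le_max_right _ _) hv
    have s4 : b ≤ C * v := by
      have h1 : C * (b / C) ≤ C * v := mul_le_mul_of_nonneg_left hbC hCpos.le
      rw [mul_div_cancel₀ _ hCpos.ne'] at h1
      exact h1
    have s5 : C * v = Real.exp (-(2*M+1)) * δ * ((1/2) * v) := by rw [hCdef]; ring
    exact le_trans (s5 ▸ s4) s3
  · rw [tendsto_atTop]
    intro b
    have hlogδ : Real.log δ < 0 := Real.log_neg hδ0 hδ1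
    have hE : (0:ℝ) < Real.exp (-(2*M - Real.log δ)) := Real.exp_pos _
    set C : ℝ := Real.exp (-(2*M - Real.log δ)) * (1/2) * (1/2) with hCdef
    have hCpos : 0 < C := by positivity
    set V : ℝ := max 1 (b / C) with hVdef
    have hV1 : 1 ≤ V := le_max_left _ _
    set T : ℝ := hF (1-δ) + 2*M + V with hTdef
    set m : ℝ := max (1/2) (1 - Real.exp (-(T+1))) with hmdef
    have hm1 : m < 1 := by
      apply max_lt (by norm_num)
      linarith [Real.exp_pos (-(T+1))]
    have hev : ∀ᶠ cL in nhdsWithin (1:ℝ) (Set.Ioo (0:ℝ) 1), cL ∈ Set.Ioo (0:ℝ) 1 ∧ m < cL := by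
      filter_upwards [eventually_mem_nhdsWithin,
        (eventually_gt_nhds hm1).filter_mono nhdsWithin_le_nhds] with x h1 h2
      exact ⟨h1, h2⟩
    filter_upwards [hev] with cL hcLmem
    obtain ⟨hL, hgt⟩ := hcLmem
    have hcLhalf : 1/2 < cL := lt_of_le_of_lt (le_max_left _ _) hgt
    have hnuL : T + 1 ≤ nuF cL := by
      have h0 : (0:ℝ) < 1 - cL := by linarith [hL.2]
      have h1 : 1 - cL < Real.exp (-(T+1)) := by
        have := lt_of_le_of_lt (le_max_right (1/2) (1 - Real.exp (-(T+1)))) hgt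
        linarith
      have h2 : Real.log (1 - cL) < -(T+1) := (Real.log_lt_iff_lt_exp h0).2 h1
      unfold nuF; linarith
    have hhFL : T ≤ hF cL := by
      have h1 : Real.log (1/2) ≤ Real.log cL :=
        Real.log_le_log (by norm_num) (by linarith)
      have h2 : Real.log (1/2) = -Real.log 2 := by rw [one_div, Real.log_inv]
      rw [hF_eq cL hL]; linarith
    apply le_csInf
    · exact ⟨Dsedan (1-δ) cL 0 0, 1-δ, ⟨by linarith, le_refl _⟩, 0, ⟨by linarith, hM.le⟩,
        0, ⟨by linarith, hM.le⟩, rfl⟩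
    rintro d ⟨cK, hcK, ΦK, hΦK, ΦL, hΦL, rfl⟩
    have hKIoo : cK ∈ Set.Ioo (0:ℝ) 1 := ⟨hcK.1, by linarith [hcK.2]⟩
    set u : ℝ := (ΦK + nuF cK) - (ΦL + nuF cL) with hudef
    set v : ℝ := hF cK + ΦK - hF cL - ΦL with hvdef
    have hnuδ : nuF (1-δ) = -Real.log δ := by
      unfold nuF; norm_num
    have hnuK : nuF cK ≤ -Real.log δ := by
      rw [← hnuδ]; exact nuF_mono cK (1-δ) (by linarith) hcK.2
    have hnuL0 : 0 ≤ nuF cL := nuF_nonneg cL hL.1.le hL.2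
    have hu : u ≤ 2*M - Real.log δ := by
      rw [hudef]; linarith [hΦK.2, hΦL.1]
    have hB : Real.exp (-(2*M - Real.log δ)) ≤ bernoulliB u :=
      bernoulliB_ge u _ hu (by linarith)
    have hv : v ≤ -V := by
      have h1 : hF cK ≤ hF (1-δ) := hF_mono cK (1-δ) hKIoo.1 (by linarith) hcK.2
      rw [hvdef]; rw [hTdef] at hhFL; linarith [hΦK.2, hΦL.1]
    have hv1 : v ≤ -1 := le_trans hv (by linarith)
    have hev2 : (1:ℝ)/2 ≤ 1 - Real.exp v := by
      have h1 : Real.exp v ≤ Real.exp (-1) := Real.exp_le_exp.2 hv1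
      linarith
    rw [Dsedan_eq2 cK cL ΦK ΦL hKIoo hL, ← hudef, ← hvdef]
    have s1 : Real.exp (-(2*M - Real.log δ)) * (1/2) ≤ bernoulliB u * cL :=
      mul_le_mul hB hcLhalf.le (by norm_num) (bernoulliB_pos u).le
    have s2 : (1/2) * V ≤ (Real.exp v - 1) * v := by
      have h1 : (1/2) * V ≤ (1 - Real.exp v) * (-v) :=
        mul_le_mul hev2 (by linarith) (by linarith) (by linarith)
      nlinarith [h1]
    have s3 : Real.exp (-(2*M - Real.log δ)) * (1/2) * ((1/2) * V) ≤
        bernoulliB u * cL * ((Real.exp v - 1) * v) :=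
      mul_le_mul s1 s2 (by linarith) (mul_nonneg (bernoulliB_pos u).le hL.1.le)
    have hbC : b / C ≤ V := le_max_right _ _
    have s4 : b ≤ C * V := by
      have h1 : C * (b / C) ≤ C * V := mul_le_mul_of_nonneg_left hbC hCpos.le
      rw [mul_div_cancel₀ _ hCpos.ne'] at h1
      exact h1
    have s5 : C * V = Real.exp (-(2*M - Real.log δ)) * (1/2) * ((1/2) * V) := by
      rw [hCdef]; ring
    exact le_trans (s5 ▸ s4) s3
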